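/- arXiv:2301.05512 — 5 statements merged into one kernel-verified Lean document; each statement's English description precedes it below -/
import Mathlib

section
/- For two probability measures μ and ν on the real line with finite first moments, the Kantorovich (Wasserstein-1) distance satisfies W₁(μ, ν) = ∫_ℝ |F_μ(x) − F_ν(x)| dx, where F_μ and F_ν are the cumulative distribution functions of μ and ν. -/
/-!
Both sides come from the layer-cake identity `|x - y| = ∫ 1[exactly one of x ≤ t, y ≤ t] dt`.
For a coupling `π` of `μ` and `ν`, Tonelli turns the cost into `∫ π(A_t ∆ B_t) dt` with
`A_t = {x ≤ t}`, `B_t = {y ≤ t}`, and `π(A_t ∆ B_t) ≥ |π A_t - π B_t| = |F_μ(t) - F_ν(t)|`.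
The comonotone coupling `(F_μ⁻¹(U), F_ν⁻¹(U))`, `U` uniform on `(0, 1)`, attains this bound for
every `t`, since `F_μ⁻¹(u) ≤ t ↔ u ≤ F_μ(t)` makes `A_t` and `B_t` nested.
-/

open MeasureTheory ProbabilityTheory Set
open scoped symmDiff

/-- The Kantorovich (Wasserstein-1) distance between two measures on `ℝ`,
defined as the infimum over couplings of the expected distance. -/
noncomputable def W1 (μ ν : Measure ℝ) : ℝ :=
  ⨅ π : {π : Measure (ℝ × ℝ) // π.map Prod.fst = μ ∧ π.map Prod.snd = ν},
    ∫ p, |p.1 - p.2| ∂(π : Measure (ℝ × ℝ))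

lemma ENNReal.ofReal_abs_eq_add_ofReal_neg (x : ℝ) :
    ENNReal.ofReal |x| = ENNReal.ofReal x + ENNReal.ofReal (-x) := by
  rcases le_total 0 x with hx | hx
  · rw [abs_of_nonneg hx, ENNReal.ofReal_of_nonpos (neg_nonpos.2 hx), add_zero]
  · rw [abs_of_nonpos hx, ENNReal.ofReal_of_nonpos hx, zero_add]

lemma Real.volume_Ici_symmDiff_Ici (a b : ℝ) :
    volume (Ici a ∆ Ici b) = ENNReal.ofReal |a - b| := by
  rw [measure_symmDiff_eq measurableSet_Ici.nullMeasurableSet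
      measurableSet_Ici.nullMeasurableSet, Ici_sdiff_Ici, Ici_sdiff_Ici, Real.volume_Ico,
    Real.volume_Ico, ENNReal.ofReal_abs_eq_add_ofReal_neg, neg_sub, add_comm]

lemma Real.volume_restrict_Ioo_zero_one_Ioc {a b : ℝ} (ha : 0 ≤ a) (hb : b ≤ 1) :
    volume.restrict (Ioo 0 1) (Ioc a b) = ENNReal.ofReal (b - a) := by
  rw [Measure.restrict_apply measurableSet_Ioc, ← Real.volume_Ioo]
  refine le_antisymm ?_ (measure_mono ?_)
  · rw [Real.volume_Ioo, ← Real.volume_Ioc]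
    exact measure_mono inter_subset_left
  · exact fun u hu => ⟨Ioo_subset_Ioc_self hu, ha.trans_lt hu.1, hu.2.trans_le hb⟩

lemma Real.volume_restrict_Ioo_zero_one_Iic {c : ℝ} (hc : c ≤ 1) :
    volume.restrict (Ioo 0 1) (Iic c) = ENNReal.ofReal c := by
  have : Iic c ∩ Ioo 0 1 = Ioc 0 c ∩ Ioo 0 1 := by
    ext u
    simp only [mem_inter_iff, mem_Iic, mem_Ioc, mem_Ioo]
    tauto
  rw [Measure.restrict_apply measurableSet_Iic, this, ← Measure.restrict_apply measurableSet_Ioc,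
    Real.volume_restrict_Ioo_zero_one_Ioc le_rfl hc, sub_zero]

namespace MeasureTheory

lemma lintegral_ofReal_abs_sub_eq_lintegral_measure_symmDiff (π : Measure (ℝ × ℝ)) [SFinite π] :
    ∫⁻ p, ENNReal.ofReal |p.1 - p.2| ∂π = ∫⁻ t, π ({p | p.1 ≤ t} ∆ {p | p.2 ≤ t}) := by
  have hS : MeasurableSet ({q : (ℝ × ℝ) × ℝ | q.1.1 ≤ q.2} ∆ {q | q.1.2 ≤ q.2}) :=
    (measurableSet_le measurable_fst.fst measurable_snd).symmDiff
      (measurableSet_le measurable_fst.snd measurable_snd)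
  calc ∫⁻ p, ENNReal.ofReal |p.1 - p.2| ∂π
      = ∫⁻ p, volume (Ici p.1 ∆ Ici p.2) ∂π := by
        simp_rw [Real.volume_Ici_symmDiff_Ici]
    _ = π.prod volume ({q : (ℝ × ℝ) × ℝ | q.1.1 ≤ q.2} ∆ {q | q.1.2 ≤ q.2}) :=
        (Measure.prod_apply hS).symm
    _ = ∫⁻ t, π ({p | p.1 ≤ t} ∆ {p | p.2 ≤ t}) := Measure.prod_apply_symm hS

end MeasureTheory

namespace ProbabilityTheory

/-- The generalized inverse `F_μ⁻¹`; its values outside `(0, 1)` are junk. -/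
noncomputable def quantile (μ : Measure ℝ) (u : ℝ) : ℝ := sInf {x | u ≤ cdf μ x}

variable {μ ν : Measure ℝ}

lemma quantile_le_iff {u t : ℝ} (hu : u ∈ Ioo 0 1) : quantile μ u ≤ t ↔ u ≤ cdf μ t := by
  have hne : {x | u ≤ cdf μ x}.Nonempty := (tendsto_cdf_atTop μ).eventually_const_le hu.2 |>.exists
  refine ⟨fun h => ?_, fun h => csInf_le ?_ h⟩
  · refine ge_of_tendsto (((cdf μ).right_continuous t).mono Ioi_subset_Ici_self)
      (eventually_nhdsWithin_of_forall fun x hx => ?_)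
    obtain ⟨y, hy, hyx⟩ := exists_lt_of_csInf_lt hne (h.trans_lt hx)
    exact hy.trans (monotone_cdf μ hyx.le)
  · obtain ⟨M, hM⟩ := ((tendsto_cdf_atBot μ).eventually_lt_const hu.1).exists_forall_of_atBot
    exact ⟨M, fun x hx => le_of_not_gt fun hxM => (hM x hxM.le).not_ge hx⟩

lemma monotoneOn_quantile : MonotoneOn (quantile μ) (Ioo 0 1) := fun _ hu _ hv huv =>
  (quantile_le_iff hu).2 (huv.trans ((quantile_le_iff hv).1 le_rfl))

lemma aemeasurable_quantile : AEMeasurable (quantile μ) (volume.restrict (Ioo 0 1)) :=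
  aemeasurable_restrict_of_monotoneOn measurableSet_Ioo monotoneOn_quantile

lemma preimage_quantile_Iic_ae_eq (t : ℝ) :
    quantile μ ⁻¹' Iic t =ᵐ[volume.restrict (Ioo 0 1)] Iic (cdf μ t) := by
  filter_upwards [ae_restrict_mem measurableSet_Ioo] with u hu
  exact propext (quantile_le_iff hu)

lemma map_quantile [IsProbabilityMeasure μ] :
    (volume.restrict (Ioo 0 1)).map (quantile μ) = μ := by
  refine Measure.ext_of_Iic _ _ fun t => ?_
  rw [Measure.map_apply_of_aemeasurable aemeasurable_quantile measurableSet_Iic,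
    measure_congr (preimage_quantile_Iic_ae_eq t),
    Real.volume_restrict_Ioo_zero_one_Iic (cdf_le_one μ t), ofReal_cdf]

noncomputable def quantileCoupling (μ ν : Measure ℝ) : Measure (ℝ × ℝ) :=
  (volume.restrict (Ioo 0 1)).map fun u => (quantile μ u, quantile ν u)

instance : IsFiniteMeasure (quantileCoupling μ ν) := by
  unfold quantileCoupling
  infer_instance

lemma aemeasurable_quantile_prodMk :
    AEMeasurable (fun u => (quantile μ u, quantile ν u)) (volume.restrict (Ioo 0 1)) :=
  aemeasurable_quantile.prodMk aemeasurable_quantile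

lemma quantileCoupling_map_fst [IsProbabilityMeasure μ] :
    (quantileCoupling μ ν).map Prod.fst = μ := by
  rw [quantileCoupling, AEMeasurable.map_map_of_aemeasurable measurable_fst.aemeasurable
    aemeasurable_quantile_prodMk]
  exact map_quantile

lemma quantileCoupling_map_snd [IsProbabilityMeasure ν] :
    (quantileCoupling μ ν).map Prod.snd = ν := by
  rw [quantileCoupling, AEMeasurable.map_map_of_aemeasurable measurable_snd.aemeasurable
    aemeasurable_quantile_prodMk]
  exact map_quantile

lemma quantileCoupling_symmDiff (t : ℝ) :
    quantileCoupling μ ν ({p | p.1 ≤ t} ∆ {p | p.2 ≤ t}) =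
      ENNReal.ofReal |cdf μ t - cdf ν t| := by
  rw [quantileCoupling, Measure.map_apply_of_aemeasurable aemeasurable_quantile_prodMk
      ((measurableSet_le measurable_fst measurable_const).symmDiff
        (measurableSet_le measurable_snd measurable_const)), preimage_symmDiff]
  refine (measure_congr ((preimage_quantile_Iic_ae_eq t).symmDiff
    (preimage_quantile_Iic_ae_eq t))).trans ?_
  rw [measure_symmDiff_eq measurableSet_Iic.nullMeasurableSet measurableSet_Iic.nullMeasurableSet,
    Iic_sdiff_Iic, Iic_sdiff_Iic,
    Real.volume_restrict_Ioo_zero_one_Ioc (cdf_nonneg ν t) (cdf_le_one μ t),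
    Real.volume_restrict_Ioo_zero_one_Ioc (cdf_nonneg μ t) (cdf_le_one ν t),
    ENNReal.ofReal_abs_eq_add_ofReal_neg, neg_sub]

lemma lintegral_ofReal_abs_sub_quantileCoupling :
    ∫⁻ p, ENNReal.ofReal |p.1 - p.2| ∂(quantileCoupling μ ν) =
      ∫⁻ t, ENNReal.ofReal |cdf μ t - cdf ν t| := by
  rw [lintegral_ofReal_abs_sub_eq_lintegral_measure_symmDiff]
  simp_rw [quantileCoupling_symmDiff]

variable {π : Measure (ℝ × ℝ)}

lemma measure_fst_le_of_map_fst [IsProbabilityMeasure μ] (h : π.map Prod.fst = μ) (t : ℝ) :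
    π {p | p.1 ≤ t} = ENNReal.ofReal (cdf μ t) := by
  rw [ofReal_cdf, ← h, Measure.map_apply measurable_fst measurableSet_Iic]
  rfl

lemma measure_snd_le_of_map_snd [IsProbabilityMeasure ν] (h : π.map Prod.snd = ν) (t : ℝ) :
    π {p | p.2 ≤ t} = ENNReal.ofReal (cdf ν t) := by
  rw [ofReal_cdf, ← h, Measure.map_apply measurable_snd measurableSet_Iic]
  rfl

lemma ofReal_abs_cdf_sub_le_measure_symmDiff [IsProbabilityMeasure μ] [IsProbabilityMeasure ν]
    (h1 : π.map Prod.fst = μ) (h2 : π.map Prod.snd = ν) (t : ℝ) :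
    ENNReal.ofReal |cdf μ t - cdf ν t| ≤ π ({p | p.1 ≤ t} ∆ {p | p.2 ≤ t}) := by
  rw [measure_symmDiff_eq (measurableSet_le measurable_fst measurable_const).nullMeasurableSet
      (measurableSet_le measurable_snd measurable_const).nullMeasurableSet,
    ENNReal.ofReal_abs_eq_add_ofReal_neg, neg_sub, ENNReal.ofReal_sub _ (cdf_nonneg ν t),
    ENNReal.ofReal_sub _ (cdf_nonneg μ t), ← measure_fst_le_of_map_fst h1,
    ← measure_snd_le_of_map_snd h2]
  exact add_le_add le_measure_sdiff le_measure_sdiff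

lemma lintegral_ofReal_abs_cdf_sub_le [IsProbabilityMeasure μ] [IsProbabilityMeasure ν]
    (h1 : π.map Prod.fst = μ) (h2 : π.map Prod.snd = ν) :
    ∫⁻ t, ENNReal.ofReal |cdf μ t - cdf ν t| ≤ ∫⁻ p, ENNReal.ofReal |p.1 - p.2| ∂π := by
  have : IsProbabilityMeasure (π.map Prod.fst) := h1 ▸ inferInstance
  have : IsProbabilityMeasure π := Measure.isProbabilityMeasure_of_map Prod.fst
  rw [lintegral_ofReal_abs_sub_eq_lintegral_measure_symmDiff]
  exact lintegral_mono (ofReal_abs_cdf_sub_le_measure_symmDiff h1 h2)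

lemma integrable_abs_sub_of_map (h1 : π.map Prod.fst = μ) (h2 : π.map Prod.snd = ν)
    (hμ : Integrable (fun x => x) μ) (hν : Integrable (fun x => x) ν) :
    Integrable (fun p : ℝ × ℝ => |p.1 - p.2|) π := by
  rw [← h1, integrable_map_measure (g := fun x => x) aestronglyMeasurable_id
    measurable_fst.aemeasurable] at hμ
  rw [← h2, integrable_map_measure (g := fun x => x) aestronglyMeasurable_id
    measurable_snd.aemeasurable] at hν
  exact (hμ.sub hν).abs

lemma integral_abs_sub_quantileCoupling :
    ∫ p, |p.1 - p.2| ∂(quantileCoupling μ ν) = ∫ t, |cdf μ t - cdf ν t| := by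
  rw [integral_eq_lintegral_of_nonneg_ae (f := fun p : ℝ × ℝ => |p.1 - p.2|)
      (ae_of_all _ fun _ => abs_nonneg _) (by fun_prop),
    integral_eq_lintegral_of_nonneg_ae (f := fun t => |cdf μ t - cdf ν t|)
      (ae_of_all _ fun _ => abs_nonneg _)
      ((monotone_cdf μ).measurable.sub (monotone_cdf ν).measurable).abs.aestronglyMeasurable,
    lintegral_ofReal_abs_sub_quantileCoupling]

lemma integral_abs_sub_quantileCoupling_le [IsProbabilityMeasure μ] [IsProbabilityMeasure ν]
    (h1 : π.map Prod.fst = μ) (h2 : π.map Prod.snd = ν)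
    (hμ : Integrable (fun x => x) μ) (hν : Integrable (fun x => x) ν) :
    ∫ p, |p.1 - p.2| ∂(quantileCoupling μ ν) ≤ ∫ p, |p.1 - p.2| ∂π := by
  rw [← ENNReal.ofReal_le_ofReal_iff (integral_nonneg fun _ => abs_nonneg _),
    ofReal_integral_eq_lintegral_ofReal (integrable_abs_sub_of_map quantileCoupling_map_fst
      quantileCoupling_map_snd hμ hν) (ae_of_all _ fun _ => abs_nonneg _),
    ofReal_integral_eq_lintegral_ofReal (integrable_abs_sub_of_map h1 h2 hμ hν)
      (ae_of_all _ fun _ => abs_nonneg _),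
    lintegral_ofReal_abs_sub_quantileCoupling]
  exact lintegral_ofReal_abs_cdf_sub_le h1 h2

end ProbabilityTheory

/-- For probability measures on `ℝ` with finite first moments,
`W₁(μ, ν) = ∫ |F_μ(x) - F_ν(x)| dx`. -/
theorem kantorovich_eq_integral_abs_cdf_sub (μ ν : Measure ℝ)
    [IsProbabilityMeasure μ] [IsProbabilityMeasure ν]
    (hμ : Integrable (fun x => x) μ) (hν : Integrable (fun x => x) ν) :
    W1 μ ν = ∫ x, |cdf μ x - cdf ν x| := by
  rw [W1, ← integral_abs_sub_quantileCoupling]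
  exact IsLeast.csInf_eq
    ⟨⟨⟨quantileCoupling μ ν, quantileCoupling_map_fst, quantileCoupling_map_snd⟩, rfl⟩,
      forall_mem_range.2 fun ⟨_, h1, h2⟩ => integral_abs_sub_quantileCoupling_le h1 h2 hμ hν⟩
end

section
/- Let X be an integrable nonnegative real random variable with tail function H(t) = P(X > t), and let Q be the càdlàg inverse of H, Q(u) = inf{t ≥ 0 : H(t) ≤ u}. Then for any v ∈ (0,1], ∫_{Q(v)}^∞ H(t) dt ≤ ∫_0^v Q(u) du. -/
/-!
Both sides are areas of regions in the plane. By the layer-cake formula, `∫_{Q(v)}^∞ H` is the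
area of `{(t, u) : t > Q(v), 0 < u < H(t)}`. Beyond `Q(v)` the tail satisfies `H ≤ v`, and
`u < H(t)` forces `t ≤ Q(u)`, so the section of this region at height `u` is empty unless
`u ∈ (0, v]`, where it lies in `(Q(v), Q(u)]`; hence the area is at most `∫_0^v (Q(u) - Q(v)) du`.
Conversely `t < Q(u)` forces `u < H(t)`, so `∫_0^∞ Q ≤ ∫_0^∞ H = 𝔼[X⁺] < ∞`; this finiteness lets
the inequality pass from lower Lebesgue integrals to Bochner integrals.
-/

open MeasureTheory Set Filter Topology

noncomputable def tailInverse (H : ℝ → ℝ) (u : ℝ) : ℝ := sInf {t | 0 ≤ t ∧ H t ≤ u}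

section tailInverse

variable {H : ℝ → ℝ} {t u v : ℝ}

lemma tailInverse_nonneg (H : ℝ → ℝ) (u : ℝ) : 0 ≤ tailInverse H u :=
  Real.sInf_nonneg fun _ hs => hs.1

lemma bddBelow_tailInverse_set (H : ℝ → ℝ) (u : ℝ) : BddBelow {t | 0 ≤ t ∧ H t ≤ u} :=
  ⟨0, fun _ hs => hs.1⟩

lemma nonempty_tailInverse_set (hlim : Tendsto H atTop (𝓝 0)) (hu : 0 < u) :
    {t | 0 ≤ t ∧ H t ≤ u}.Nonempty :=
  ((eventually_ge_atTop 0).and (hlim.eventually_lt_const hu)).exists.imp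
    fun _ ht => ⟨ht.1, ht.2.le⟩

lemma lt_apply_of_lt_tailInverse (ht : 0 ≤ t) (h : t < tailInverse H u) : u < H t :=
  not_le.mp fun hle => h.not_ge (csInf_le (bddBelow_tailInverse_set H u) ⟨ht, hle⟩)

lemma apply_le_of_tailInverse_lt (hH : Antitone H) (hlim : Tendsto H atTop (𝓝 0)) (hu : 0 < u)
    (h : tailInverse H u < t) : H t ≤ u := by
  obtain ⟨s, hs, hst⟩ := exists_lt_of_csInf_lt (nonempty_tailInverse_set hlim hu) h
  exact (hH hst.le).trans hs.2

lemma le_tailInverse_of_lt_apply (hH : Antitone H) (hlim : Tendsto H atTop (𝓝 0)) (hu : 0 < u)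
    (h : u < H t) : t ≤ tailInverse H u :=
  le_csInf (nonempty_tailInverse_set hlim hu) fun _ hs =>
    not_lt.mp fun hst => h.not_ge ((hH hst.le).trans hs.2)

lemma tailInverse_antitoneOn (hlim : Tendsto H atTop (𝓝 0)) :
    AntitoneOn (tailInverse H) (Ioi 0) := fun _ hu _ _ huv =>
  csInf_le_csInf (bddBelow_tailInverse_set H _) (nonempty_tailInverse_set hlim hu)
    fun _ hs => ⟨hs.1, hs.2.trans huv⟩

lemma setLIntegral_ofReal_eq_lintegral_volume_lt (hH : Antitone H)
    (hlim : Tendsto H atTop (𝓝 0)) {s : Set ℝ} (hs : MeasurableSet s) :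
    ∫⁻ t in s, ENNReal.ofReal (H t) = ∫⁻ u in Ioi 0, volume ({t | u < H t} ∩ s) := by
  rw [lintegral_eq_lintegral_meas_lt _ (ae_of_all _ (hH.le_of_tendsto hlim))
    hH.measurable.aemeasurable]
  simp only [Measure.restrict_apply' hs]

lemma setLIntegral_Ioi_tailInverse_le (hH : Antitone H) (hlim : Tendsto H atTop (𝓝 0))
    (hv : 0 < v) :
    ∫⁻ t in Ioi (tailInverse H v), ENNReal.ofReal (H t) ≤
      ∫⁻ u in Ioc 0 v, ENNReal.ofReal (tailInverse H u - tailInverse H v) := by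
  rw [setLIntegral_ofReal_eq_lintegral_volume_lt hH hlim measurableSet_Ioi,
    ← inter_eq_left.mpr Ioc_subset_Ioi_self, ← setLIntegral_indicator measurableSet_Ioc]
  refine lintegral_mono_ae (ae_restrict_of_forall_mem measurableSet_Ioi fun u hu => ?_)
  by_cases huv : u ∈ Ioc 0 v
  · rw [indicator_of_mem huv, ← Real.volume_Ioc]
    exact measure_mono fun t ht => ⟨ht.2, le_tailInverse_of_lt_apply hH hlim hu ht.1⟩
  · have hempty : {t | u < H t} ∩ Ioi (tailInverse H v) = ∅ :=
      eq_empty_of_forall_notMem fun t ht =>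
        huv ⟨hu, ht.1.le.trans (apply_le_of_tailInverse_lt hH hlim hv ht.2)⟩
    simp [hempty]

lemma setLIntegral_Ioi_tailInverse_le_setLIntegral_Ioi (hH : Antitone H)
    (hlim : Tendsto H atTop (𝓝 0)) :
    ∫⁻ u in Ioi 0, ENNReal.ofReal (tailInverse H u) ≤ ∫⁻ t in Ioi 0, ENNReal.ofReal (H t) := by
  rw [setLIntegral_ofReal_eq_lintegral_volume_lt hH hlim measurableSet_Ioi]
  refine lintegral_mono fun u => ?_
  rw [← sub_zero (tailInverse H u), ← Real.volume_Ioo]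
  exact measure_mono fun t ht => ⟨lt_apply_of_lt_tailInverse ht.1.le ht.2, ht.1⟩

end tailInverse

section tail

variable {Ω : Type*} [MeasurableSpace Ω] {μ : Measure Ω} {X : Ω → ℝ}

lemma tendsto_measure_lt_atTop [IsFiniteMeasure μ] (hX : AEMeasurable X μ) :
    Tendsto (fun t => μ {ω | t < X ω}) atTop (𝓝 0) := by
  have hempty : ⋂ t : ℝ, {ω | t < X ω} = ∅ :=
    eq_empty_of_forall_notMem fun ω hω => lt_irrefl (X ω) (mem_iInter.mp hω (X ω))
  have hanti : Antitone fun t : ℝ => {ω | t < X ω} := fun _ _ hst _ hω => hst.trans_lt hω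
  have := tendsto_measure_iInter_atTop (fun t => nullMeasurableSet_lt aemeasurable_const hX) hanti
    ⟨0, measure_ne_top μ _⟩
  rwa [hempty, measure_empty] at this

lemma MeasureTheory.Integrable.setLIntegral_Ioi_measure_lt_lt_top (hX : Integrable X μ) :
    ∫⁻ t in Ioi 0, μ {ω | t < X ω} < ⊤ := by
  have hpos : ∀ t ∈ Ioi (0 : ℝ), {ω | t < X ω} = {ω | t < max (X ω) 0} :=
    fun t (ht : 0 < t) => by simp [ht.not_gt]
  rw [setLIntegral_congr_fun measurableSet_Ioi fun t ht => congrArg μ (hpos t ht),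
    ← lintegral_eq_lintegral_meas_lt (f := fun ω => max (X ω) 0) μ
      (ae_of_all _ fun _ => le_max_right _ _) hX.pos_part.aemeasurable]
  exact hX.pos_part.lintegral_lt_top

end tail

theorem integral_tail_le_integral_quantile_general {Ω : Type*} [MeasurableSpace Ω]
    (P : Measure Ω) [IsProbabilityMeasure P] (X : Ω → ℝ) (hXint : Integrable X P)
    (H Q : ℝ → ℝ)
    (hH : ∀ t, H t = (P {ω | t < X ω}).toReal)
    (hQ : ∀ u, Q u = sInf {t | 0 ≤ t ∧ H t ≤ u})
    (v : ℝ) (hv : v ∈ Set.Ioc (0 : ℝ) 1) :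
    ∫ t in Set.Ioi (Q v), H t ≤ ∫ u in Set.Ioc 0 v, Q u := by
  obtain rfl : Q = tailInverse H := funext hQ
  have hH_anti : Antitone H := fun s t hst => by
    simp only [hH]
    exact ENNReal.toReal_mono (measure_ne_top _ _) (measure_mono fun _ hω => hst.trans_lt hω)
  have hH_lim : Tendsto H atTop (𝓝 0) := by
    rw [show H = _ from funext hH]
    exact (ENNReal.tendsto_toReal ENNReal.zero_ne_top).comp
      (tendsto_measure_lt_atTop hXint.aemeasurable)
  have hQ_fin : ∫⁻ u in Ioc 0 v, ENNReal.ofReal (tailInverse H u) < ⊤ := calc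
    _ ≤ ∫⁻ u in Ioi 0, ENNReal.ofReal (tailInverse H u) := lintegral_mono_set Ioc_subset_Ioi_self
    _ ≤ ∫⁻ t in Ioi 0, ENNReal.ofReal (H t) :=
      setLIntegral_Ioi_tailInverse_le_setLIntegral_Ioi hH_anti hH_lim
    _ = ∫⁻ t in Ioi 0, P {ω | t < X ω} := by
      simp only [hH, ENNReal.ofReal_toReal (measure_ne_top _ _)]
    _ < ⊤ := hXint.setLIntegral_Ioi_measure_lt_lt_top
  have hQ_meas : AEStronglyMeasurable (tailInverse H) (volume.restrict (Ioc 0 v)) :=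
    (aemeasurable_restrict_of_antitoneOn measurableSet_Ioc
      ((tailInverse_antitoneOn hH_lim).mono Ioc_subset_Ioi_self)).aestronglyMeasurable
  rw [integral_eq_lintegral_of_nonneg_ae (ae_of_all _ (hH_anti.le_of_tendsto hH_lim))
      hH_anti.measurable.aestronglyMeasurable,
    integral_eq_lintegral_of_nonneg_ae (ae_of_all _ (tailInverse_nonneg H)) hQ_meas]
  refine ENNReal.toReal_mono hQ_fin.ne
    ((setLIntegral_Ioi_tailInverse_le hH_anti hH_lim hv.1).trans (lintegral_mono fun u => ?_))
  exact ENNReal.ofReal_le_ofReal (sub_le_self _ (tailInverse_nonneg H v))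

/-- For an integrable nonnegative random variable with tail function `H` and
generalized inverse `Q`, one has `∫_{Q(v)}^∞ H(t) dt ≤ ∫_0^v Q(u) du`. -/
theorem integral_tail_le_integral_quantile {Ω : Type*} [MeasurableSpace Ω]
    (P : Measure Ω) [IsProbabilityMeasure P] (X : Ω → ℝ) (hXm : Measurable X)
    (hX0 : ∀ ω, 0 ≤ X ω) (hXint : Integrable X P)
    (H Q : ℝ → ℝ)
    (hH : ∀ t, H t = (P {ω | t < X ω}).toReal)
    (hQ : ∀ u, Q u = sInf {t | 0 ≤ t ∧ H t ≤ u})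
    (v : ℝ) (hv : v ∈ Set.Ioc (0 : ℝ) 1) :
    ∫ t in Set.Ioi (Q v), H t ≤ ∫ u in Set.Ioc 0 v, Q u :=
  integral_tail_le_integral_quantile_general P X hXint H Q hH hQ v hv
end

section
/- Let (X_i)_{i∈ℤ} be a strictly stationary sequence of real random variables with strong mixing coefficients α(k), and let X_i' be the truncation of X_i at level M (i.e., X_i' = (X_i ∧ M) ∨ (−M)). Then for every q ≥ 1 and every t ∈ ℝ, Var(∑_{i=1}^q 1_{X_i' ≤ t}) ≤ 8 q ∑_{k=0}^{q−1} min(α(k), H(t) ) for t ≥ 0, where H(t) = P(|X₀| > t). -/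
open MeasureTheory

/-- The σ-algebra of the past, `σ(X_i, i ≤ 0)`. -/
def pastSigma {Ω : Type*} (X : ℤ → Ω → ℝ) : MeasurableSpace Ω :=
  ⨆ i : {i : ℤ // i ≤ 0}, MeasurableSpace.comap (X i.1) (inferInstance : MeasurableSpace ℝ)

/-- The σ-algebra of the future, `σ(X_i, i ≥ k)`. -/
def futureSigma {Ω : Type*} (X : ℤ → Ω → ℝ) (k : ℤ) : MeasurableSpace Ω :=
  ⨆ i : {i : ℤ // k ≤ i}, MeasurableSpace.comap (X i.1) (inferInstance : MeasurableSpace ℝ)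

/-- Rosenblatt's strong mixing coefficients `α(k)`. -/
noncomputable def alphaMix {Ω : Type*} [MeasurableSpace Ω] (P : Measure Ω)
    (X : ℤ → Ω → ℝ) (k : ℕ) : ℝ :=
  sSup {r | ∃ A B : Set Ω, MeasurableSet[pastSigma X] A ∧
    MeasurableSet[futureSigma X k] B ∧
    r = |(P (A ∩ B)).toReal - (P A).toReal * (P B).toReal|}

/-- Strict stationarity: the finite dimensional distributions are shift invariant. -/
def IsStrictlyStationary {Ω : Type*} [MeasurableSpace Ω] (P : Measure Ω)
    (X : ℤ → Ω → ℝ) : Prop :=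
  ∀ (m : ℕ) (ind : Fin m → ℤ) (h : ℤ),
    Measure.map (fun ω j => X (ind j + h) ω) P = Measure.map (fun ω j => X (ind j) ω) P

/-- Truncation at level `M`. -/
def trunc (M x : ℝ) : ℝ := max (min x M) (-M)

/-!
For `A_i = {X_i' ≤ t}` the variance of `∑ 1_{A_i}` is the double sum of the covariances
`P(A_i ∩ A_j) - P(A_i) P(A_j)`. By stationarity each one equals the covariance of `A_0` and
`A_{|j-i|}`, which lie in the past and in the future `σ`-algebra at lag `|j-i|`, so it is at most
`α(|j-i|)`. It is also at most `P(A_iᶜ) = P(A_0ᶜ)`, and for `t ≥ 0` the truncation can only exceed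
`t` where `|X_0| > t`, so `P(A_0ᶜ) ≤ H(t)`. Every lag `k < q` occurs for at most `2q` pairs.
-/

open MeasureTheory ProbabilityTheory Finset

lemma trunc_measurable (M : ℝ) : Measurable (trunc M) :=
  (measurable_id.min measurable_const).max measurable_const

lemma lt_abs_of_lt_trunc {M t x : ℝ} (hMt : -M ≤ t) (h : t < trunc M x) : t < |x| := by
  rcases lt_max_iff.mp h with h | h
  · exact (lt_min_iff.mp h).1.trans_le (le_abs_self x)
  · exact absurd h hMt.not_gt

section IndicatorCovariance

variable {Ω : Type*} [MeasurableSpace Ω] {μ : Measure Ω} [IsProbabilityMeasure μ]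

lemma covariance_indicator_one {A B : Set Ω} (hA : MeasurableSet A) (hB : MeasurableSet B) :
    cov[A.indicator 1, B.indicator 1; μ] = μ.real (A ∩ B) - μ.real A * μ.real B := by
  have hA2 : MemLp (A.indicator 1) 2 μ := (memLp_const (1 : ℝ)).indicator hA
  have hB2 : MemLp (B.indicator 1) 2 μ := (memLp_const (1 : ℝ)).indicator hB
  rw [covariance_eq_sub hA2 hB2, ← Set.inter_indicator_one,
    integral_indicator_one (hA.inter hB), integral_indicator_one hA, integral_indicator_one hB]

lemma variance_sum_indicator_one {ι : Type*} {s : Finset ι} {A : ι → Set Ω}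
    (hA : ∀ i ∈ s, MeasurableSet (A i)) :
    Var[fun ω ↦ ∑ i ∈ s, (A i).indicator 1 ω; μ]
      = ∑ i ∈ s, ∑ j ∈ s, (μ.real (A i ∩ A j) - μ.real (A i) * μ.real (A j)) := by
  have hA2 : ∀ i ∈ s, MemLp ((A i).indicator 1) 2 μ := fun i hi ↦
    (memLp_const (1 : ℝ)).indicator (hA i hi)
  rw [variance_fun_sum' hA2]
  exact sum_congr rfl fun i hi ↦ sum_congr rfl fun j hj ↦
    covariance_indicator_one (hA i hi) (hA j hj)

lemma abs_measureReal_inter_sub_mul_le_compl {A : Set Ω} (hA : MeasurableSet A) (B : Set Ω) :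
    |μ.real (A ∩ B) - μ.real A * μ.real B| ≤ μ.real Aᶜ := by
  have hinter : μ.real (A ∩ B) ≤ μ.real B := measureReal_mono Set.inter_subset_right
  have hunion : μ.real (A ∪ B) + μ.real (A ∩ B) = μ.real A + μ.real B :=
    measureReal_union_add_inter' hA
  have hunion_le : μ.real (A ∪ B) ≤ 1 := measureReal_le_one
  have hA_le : μ.real A ≤ 1 := measureReal_le_one
  have hB_le : μ.real B ≤ 1 := measureReal_le_one
  have hA_nonneg : 0 ≤ μ.real A := measureReal_nonneg
  have hB_nonneg : 0 ≤ μ.real B := measureReal_nonneg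
  -- above: `P(A ∩ B) - P(A) P(B) ≤ P(B) P(Aᶜ)`;
  -- below: `P(A ∩ B) ≥ P(A) + P(B) - 1` gives `P(A ∩ B) - P(A) P(B) ≥ -P(Aᶜ) P(Bᶜ)`
  rw [probReal_compl_eq_one_sub hA, abs_le]
  constructor <;> nlinarith

end IndicatorCovariance

section Measurability

variable {Ω : Type*} {X : ℤ → Ω → ℝ}

lemma measurableSet_pastSigma_preimage {i : ℤ} (hi : i ≤ 0) {S : Set ℝ} (hS : MeasurableSet S) :
    MeasurableSet[pastSigma X] (X i ⁻¹' S) :=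
  le_iSup (fun i : {i : ℤ // i ≤ 0} ↦ MeasurableSpace.comap (X i.1) inferInstance) ⟨i, hi⟩ _
    ⟨S, hS, rfl⟩

lemma measurableSet_futureSigma_preimage {k i : ℤ} (hi : k ≤ i) {S : Set ℝ}
    (hS : MeasurableSet S) : MeasurableSet[futureSigma X k] (X i ⁻¹' S) :=
  le_iSup (fun i : {i : ℤ // k ≤ i} ↦ MeasurableSpace.comap (X i.1) inferInstance) ⟨i, hi⟩ _
    ⟨S, hS, rfl⟩

end Measurability

section Mixing

variable {Ω : Type*} [MeasurableSpace Ω] (P : Measure Ω) [IsProbabilityMeasure P]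
  (X : ℤ → Ω → ℝ)

lemma abs_measureReal_inter_sub_mul_le_alphaMix {k : ℕ} {A B : Set Ω}
    (hA : MeasurableSet[pastSigma X] A) (hB : MeasurableSet[futureSigma X k] B) :
    |P.real (A ∩ B) - P.real A * P.real B| ≤ alphaMix P X k := by
  refine le_csSup ⟨1, ?_⟩ ⟨A, B, hA, hB, rfl⟩
  rintro r ⟨A', B', -, -, rfl⟩
  exact abs_sub_le_of_nonneg_of_le measureReal_nonneg measureReal_le_one
    (mul_nonneg measureReal_nonneg measureReal_nonneg)
    (mul_le_one₀ measureReal_le_one measureReal_nonneg measureReal_le_one)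

lemma alphaMix_nonneg (k : ℕ) : 0 ≤ alphaMix P X k :=
  (abs_nonneg _).trans <| abs_measureReal_inter_sub_mul_le_alphaMix P X (A := ∅) (B := ∅)
    (@MeasurableSet.empty _ (pastSigma X)) (@MeasurableSet.empty _ (futureSigma X k))

end Mixing

namespace IsStrictlyStationary

variable {Ω : Type*} [MeasurableSpace Ω] {P : Measure Ω} {X : ℤ → Ω → ℝ}
  {S T : Set ℝ}

lemma measureReal_inter_preimage_add (hstat : IsStrictlyStationary P X)
    (hmeas : ∀ i, Measurable (X i)) (hS : MeasurableSet S) (hT : MeasurableSet T) (i j h : ℤ) :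
    P.real (X (i + h) ⁻¹' S ∩ X (j + h) ⁻¹' T) = P.real (X i ⁻¹' S ∩ X j ⁻¹' T) := by
  have hST : MeasurableSet {v : Fin 2 → ℝ | v 0 ∈ S ∧ v 1 ∈ T} :=
    (measurable_pi_apply 0 hS).inter (measurable_pi_apply 1 hT)
  have key := congrArg (· {v : Fin 2 → ℝ | v 0 ∈ S ∧ v 1 ∈ T}) (hstat 2 ![i, j] h)
  simp only [Measure.map_apply (measurable_pi_lambda _ fun _ ↦ hmeas _) hST] at key
  exact congrArg ENNReal.toReal key

lemma measureReal_preimage_add (hstat : IsStrictlyStationary P X)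
    (hmeas : ∀ i, Measurable (X i)) (hS : MeasurableSet S) (i h : ℤ) :
    P.real (X (i + h) ⁻¹' S) = P.real (X i ⁻¹' S) := by
  simpa using hstat.measureReal_inter_preimage_add hmeas hS MeasurableSet.univ i i h

variable [IsProbabilityMeasure P]

lemma abs_measureReal_preimage_inter_sub_mul_le (hstat : IsStrictlyStationary P X)
    (hmeas : ∀ i, Measurable (X i)) (hS : MeasurableSet S) (i j : ℤ) :
    |P.real (X i ⁻¹' S ∩ X j ⁻¹' S) - P.real (X i ⁻¹' S) * P.real (X j ⁻¹' S)|
      ≤ min (alphaMix P X (j - i).natAbs) (P.real (X 0 ⁻¹' Sᶜ)) := by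
  wlog hij : i ≤ j generalizing i j
  · have hlag : (i - j).natAbs = (j - i).natAbs := by omega
    simpa only [Set.inter_comm, mul_comm, hlag] using this j i (by omega)
  refine le_min ?_ ?_
  · have hfst : P.real (X i ⁻¹' S) = P.real (X 0 ⁻¹' S) := by
      simpa using hstat.measureReal_preimage_add hmeas hS 0 i
    obtain ⟨k, rfl⟩ : ∃ k : ℕ, j = k + i := ⟨(j - i).toNat, by omega⟩
    have hpair : P.real (X i ⁻¹' S ∩ X (k + i) ⁻¹' S) = P.real (X 0 ⁻¹' S ∩ X k ⁻¹' S) := by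
      simpa using hstat.measureReal_inter_preimage_add hmeas hS hS 0 k i
    rw [hpair, hfst, hstat.measureReal_preimage_add hmeas hS, add_sub_cancel_right,
      Int.natAbs_natCast]
    exact abs_measureReal_inter_sub_mul_le_alphaMix P X
      (measurableSet_pastSigma_preimage le_rfl hS)
      (measurableSet_futureSigma_preimage le_rfl hS)
  · calc _ ≤ P.real (X i ⁻¹' S)ᶜ := abs_measureReal_inter_sub_mul_le_compl (hmeas i hS) _
      _ = P.real (X 0 ⁻¹' Sᶜ) := by
        simpa using hstat.measureReal_preimage_add hmeas hS.compl 0 i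

end IsStrictlyStationary

lemma sum_Icc_natAbs_sub_le {c : ℕ → ℝ} (hc : ∀ k, 0 ≤ c k) {q : ℕ} {i : ℤ}
    (hi : i ∈ Icc (1 : ℤ) q) :
    ∑ j ∈ Icc (1 : ℤ) q, c (j - i).natAbs ≤ 2 * ∑ k ∈ range q, c k := by
  classical
  -- `j` is determined by `|j - i|` together with the side of `i` it lies on
  set g : ℤ → ℕ × Bool := fun j ↦ ((j - i).natAbs, decide (j < i))
  have hg : Set.InjOn g (Icc (1 : ℤ) q) := by
    intro j _ j' _ h
    simp only [g, Prod.ext_iff, decide_eq_decide] at h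
    omega
  have himage : (Icc (1 : ℤ) q).image g ⊆ range q ×ˢ univ := by
    intro u hu
    simp only [mem_image, mem_Icc, g] at hu hi
    obtain ⟨j, hj, rfl⟩ := hu
    simp only [mem_product, mem_range, mem_univ, and_true]
    omega
  calc ∑ j ∈ Icc (1 : ℤ) q, c (j - i).natAbs = ∑ u ∈ (Icc (1 : ℤ) q).image g, c u.1 :=
        (sum_image (f := fun u ↦ c u.1) hg).symm
    _ ≤ ∑ u ∈ range q ×ˢ (univ : Finset Bool), c u.1 :=
        sum_le_sum_of_subset_of_nonneg himage fun u _ _ ↦ hc u.1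
    _ = 2 * ∑ k ∈ range q, c k := by simp [sum_product, two_mul, sum_add_distrib]

theorem variance_indicator_le_mixing_general {Ω : Type*} [MeasurableSpace Ω]
    (P : Measure Ω) [IsProbabilityMeasure P] (X : ℤ → Ω → ℝ)
    (hmeas : ∀ i, Measurable (X i)) (hstat : IsStrictlyStationary P X)
    (M : ℝ) (hM : 0 < M) (q : ℕ) (t : ℝ) (ht : 0 ≤ t) :
    ProbabilityTheory.variance
        (fun ω => ∑ i ∈ Finset.Icc (1 : ℤ) q,
          (if trunc M (X i ω) ≤ t then (1 : ℝ) else 0)) P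
      ≤ 8 * q * ∑ k ∈ Finset.range q,
          min (alphaMix P X k) ((P {ω | t < |X 0 ω|}).toReal) := by
  set S : Set ℝ := trunc M ⁻¹' Set.Iic t
  have hS : MeasurableSet S := trunc_measurable M measurableSet_Iic
  set c : ℕ → ℝ := fun k ↦ min (alphaMix P X k) (P {ω | t < |X 0 ω|}).toReal
  have hc : ∀ k, 0 ≤ c k := fun k ↦ le_min (alphaMix_nonneg P X k) ENNReal.toReal_nonneg
  have htail : P.real (X 0 ⁻¹' Sᶜ) ≤ (P {ω | t < |X 0 ω|}).toReal :=
    measureReal_mono fun ω hω ↦ lt_abs_of_lt_trunc (by linarith) (not_le.mp hω)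
  have hsum : (fun ω ↦ ∑ i ∈ Icc (1 : ℤ) q, if trunc M (X i ω) ≤ t then (1 : ℝ) else 0)
      = fun ω ↦ ∑ i ∈ Icc (1 : ℤ) q, (X i ⁻¹' S).indicator 1 ω := by
    funext ω
    exact sum_congr rfl fun i _ ↦ by simp [Set.indicator, S]
  rw [hsum, variance_sum_indicator_one fun i _ ↦ hmeas i hS]
  calc _ ≤ ∑ i ∈ Icc (1 : ℤ) q, ∑ j ∈ Icc (1 : ℤ) q, c (j - i).natAbs :=
        sum_le_sum fun i _ ↦ sum_le_sum fun j _ ↦ (le_abs_self _).trans <|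
          (hstat.abs_measureReal_preimage_inter_sub_mul_le hmeas hS i j).trans
            (min_le_min_left _ htail)
    _ ≤ ∑ i ∈ Icc (1 : ℤ) q, 2 * ∑ k ∈ range q, c k :=
        sum_le_sum fun i hi ↦ sum_Icc_natAbs_sub_le hc hi
    _ = 2 * q * ∑ k ∈ range q, c k := by
        simp only [sum_const, Int.card_Icc, add_sub_cancel_right, Int.toNat_natCast, nsmul_eq_mul]
        ring
    _ ≤ 8 * q * ∑ k ∈ range q, c k := by
        gcongr
        exacts [sum_nonneg fun k _ ↦ hc k, by norm_num]

/-- Variance bound for partial sums of truncated indicators in terms of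
the strong mixing coefficients and the tail function `H(t) = P(|X₀| > t)`. -/
theorem variance_indicator_le_mixing {Ω : Type*} [MeasurableSpace Ω]
    (P : Measure Ω) [IsProbabilityMeasure P] (X : ℤ → Ω → ℝ)
    (hmeas : ∀ i, Measurable (X i)) (hstat : IsStrictlyStationary P X)
    (M : ℝ) (hM : 0 < M) (q : ℕ) (hq : 1 ≤ q) (t : ℝ) (ht : 0 ≤ t) :
    ProbabilityTheory.variance
        (fun ω => ∑ i ∈ Finset.Icc (1 : ℤ) q,
          (if trunc M (X i ω) ≤ t then (1 : ℝ) else 0)) P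
      ≤ 8 * q * ∑ k ∈ Finset.range q,
          min (alphaMix P X k) ((P {ω | t < |X 0 ω|}).toReal) :=
  variance_indicator_le_mixing_general P X hmeas hstat M hM q t ht
end

section
/- Let H be the tail function of an integrable nonnegative random variable with inverse Q, let α be a nonincreasing mixing-coefficient sequence with counting inverse α^{-1}, and set R(u) = α^{-1}(u)·Q(u). Then for any v ∈ (0,1], p > 2 and q = α^{-1}(v) ∧ n: ∫_0^{Q(v)} ( ∑_{k=0}^{q−1} min(α(k), H(t)) )^{1/p} dt ≤ (v q)^{1/p} Q(v) + (∫_0^1 R(u) Q(u) du)^{1/p} · (p/(p−2)) · Q(v)^{1−2/p}. -/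
/-!
Fix `t > 0`. By the layer-cake formula on `(v, 1]`, `min (α k) (H t) ≤ v + |(v, min (α k) (H t))|`,
so summing over `k < q` gives
`∑ min (α k) (H t) ≤ v q + ∫_v^1 1_{u < H t} #{k < q : u < α k} du ≤ v q + t⁻² ∫_0^1 α⁻¹(u) Q(u)² du`,
since `u < H t` forces `t ≤ Q u` and `#{k < q : u < α k} ≤ α⁻¹(u)`. Taking `1/p`-th powers,
`x ↦ x ^ (1/p)` is subadditive, and `∫_0^{Q v} t^(-2/p) dt = p/(p-2) Q(v)^(1-2/p)`.
-/

open MeasureTheory ENNReal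

/-- The counting inverse `α⁻¹(u) = #{k ≥ 0 : α(k) > u}`. -/
noncomputable def alphaInv (α : ℕ → ℝ) (u : ℝ) : ℝ≥0∞ :=
  ∑' k, if u < α k then 1 else 0

open Set Finset

theorem sum_indicator_Iio_le_alphaInv (α : ℕ → ℝ) (s : Finset ℕ) {u : ℝ}
    (hu : alphaInv α u ≠ ⊤) :
    ∑ k ∈ s, (Iio (α k)).indicator (1 : ℝ → ℝ) u ≤ (alphaInv α u).toReal := by
  have hsum : ∑ k ∈ s, (Iio (α k)).indicator (1 : ℝ → ℝ) u
      = (∑ k ∈ s, if u < α k then (1 : ℝ≥0∞) else 0).toReal := by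
    rw [toReal_sum fun k _ => by split_ifs <;> simp]
    exact sum_congr rfl fun k _ => by by_cases h : u < α k <;> simp [h]
  rw [hsum]
  exact toReal_mono hu (ENNReal.sum_le_tsum s)

theorem le_add_integral_indicator_Iio {a b x : ℝ} (hx : x ≤ b) :
    x ≤ a + ∫ u in Ioc a b, (Iio x).indicator 1 u := by
  rw [integral_indicator_one measurableSet_Iio, measureReal_restrict_apply measurableSet_Iio]
  have hsub : Ioo a x ⊆ Iio x ∩ Ioc a b := fun u hu => ⟨hu.2, hu.1, hu.2.le.trans hx⟩
  have := measureReal_mono hsub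
    ((measure_mono inter_subset_right).trans_lt (measure_Ioc_lt_top (μ := volume))).ne
  rw [Real.volume_real_Ioo] at this
  linarith [le_max_left (x - a) 0]

theorem sum_le_mul_card_add_integral {ι : Type*} (s : Finset ι) {x : ι → ℝ} {a b : ℝ}
    (hx : ∀ i ∈ s, x i ≤ b) :
    ∑ i ∈ s, x i ≤ a * #s + ∫ u in Ioc a b, ∑ i ∈ s, (Iio (x i)).indicator 1 u := by
  rw [integral_finsetSum s fun i _ => (integrable_const 1).indicator measurableSet_Iio,
    mul_comm, ← nsmul_eq_mul, ← sum_const, ← sum_add_distrib]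
  exact sum_le_sum fun i hi => le_add_integral_indicator_Iio (hx i hi)

theorem le_sInf_sublevelSet_of_lt {H : ℝ → ℝ} (hH : AntitoneOn H (Ici 0))
    (hlim : Filter.Tendsto H Filter.atTop (nhds 0)) {t u : ℝ} (ht : 0 ≤ t) (hu : 0 < u)
    (hut : u < H t) : t ≤ sInf {s | 0 ≤ s ∧ H s ≤ u} := by
  obtain ⟨s, hsu, hs⟩ := ((hlim.eventually_lt_const hu).and (Filter.eventually_ge_atTop 0)).exists
  refine le_csInf ⟨s, hs, hsu.le⟩ fun s ⟨hs, hsu⟩ => ?_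
  by_contra! hst
  exact (hsu.trans_lt hut).not_ge (hH hs ht hst.le)

theorem sum_indicator_Iio_min_le (α : ℕ → ℝ) (s : Finset ℕ) {Q : ℝ → ℝ} {h t u : ℝ}
    (ht : 0 < t) (hu : alphaInv α u ≠ ⊤) (hQ : u < h → t ≤ Q u) :
    ∑ k ∈ s, (Iio (min (α k) h)).indicator (1 : ℝ → ℝ) u
      ≤ (alphaInv α u).toReal * Q u * Q u / t ^ 2 := by
  by_cases huh : u < h
  · have hind : ∀ k, (Iio (min (α k) h)).indicator (1 : ℝ → ℝ) u
        = (Iio (α k)).indicator 1 u := fun k => by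
      simp only [indicator_apply, Set.mem_Iio, lt_min_iff, huh, and_true]
    have hQt : 1 ≤ Q u * Q u / t ^ 2 := by
      rw [one_le_div (by positivity), sq]
      exact mul_self_le_mul_self ht.le (hQ huh)
    calc ∑ k ∈ s, (Iio (min (α k) h)).indicator (1 : ℝ → ℝ) u
        ≤ (alphaInv α u).toReal := by
          simpa only [hind] using sum_indicator_Iio_le_alphaInv α s hu
      _ ≤ (alphaInv α u).toReal * (Q u * Q u / t ^ 2) := le_mul_of_one_le_right toReal_nonneg hQt
      _ = _ := by ring
  · have hind : ∀ k, (Iio (min (α k) h)).indicator (1 : ℝ → ℝ) u = 0 := fun k => by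
      simp only [indicator_apply, Set.mem_Iio, lt_min_iff, huh, and_false, if_false]
    rw [sum_eq_zero fun k _ => hind k, mul_assoc]
    exact div_nonneg (mul_nonneg toReal_nonneg (mul_self_nonneg _)) (sq_nonneg t)

theorem sum_min_le_mul_add_integral_div_sq (α : ℕ → ℝ) (hα : ∀ u > 0, alphaInv α u < ⊤)
    {Q : ℝ → ℝ} {h t v : ℝ} (q : ℕ) (hh : h ≤ 1) (ht : 0 < t) (hv : 0 < v)
    (hQ : ∀ u > 0, u < h → t ≤ Q u)
    (hint : IntegrableOn (fun u => (alphaInv α u).toReal * Q u * Q u) (Ioc 0 1)) :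
    ∑ k ∈ range q, min (α k) h
      ≤ v * q + (∫ u in Ioc 0 1, (alphaInv α u).toReal * Q u * Q u) / t ^ 2 := by
  have hsub : Ioc v 1 ⊆ Ioc 0 1 := Ioc_subset_Ioc_left hv.le
  have hw0 : ∀ u, 0 ≤ (alphaInv α u).toReal * Q u * Q u := fun u => by
    rw [mul_assoc]; exact mul_nonneg toReal_nonneg (mul_self_nonneg _)
  calc ∑ k ∈ range q, min (α k) h
      ≤ v * #(range q) + ∫ u in Ioc v 1, ∑ k ∈ range q, (Iio (min (α k) h)).indicator 1 u :=
        sum_le_mul_card_add_integral _ fun k _ => (min_le_right _ _).trans hh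
    _ ≤ v * q + ∫ u in Ioc v 1, (alphaInv α u).toReal * Q u * Q u / t ^ 2 := by
        rw [card_range]
        refine add_le_add_right (setIntegral_mono_on ?_ ((hint.mono_set hsub).div_const _)
          measurableSet_Ioc fun u hu => ?_) _
        · exact integrable_finsetSum _ fun k _ => (integrable_const 1).indicator measurableSet_Iio
        · exact sum_indicator_Iio_min_le α _ ht (hα u (hv.trans hu.1)).ne (hQ u (hv.trans hu.1))
    _ ≤ v * q + (∫ u in Ioc 0 1, (alphaInv α u).toReal * Q u * Q u) / t ^ 2 := by
        rw [integral_div]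
        gcongr
        exact ae_of_all _ hw0

theorem integral_Ioc_zero_rpow_neg_two_div {p c : ℝ} (hp : 2 < p) (hc : 0 ≤ c) :
    ∫ t in Ioc 0 c, t ^ (-(2 / p)) = p / (p - 2) * c ^ (1 - 2 / p) := by
  have hp0 : 0 < p := by linarith
  have hr : -1 < -(2 / p) := by rw [neg_lt_neg_iff, div_lt_one hp0]; linarith
  rw [← intervalIntegral.integral_of_le hc, integral_rpow (Or.inl hr),
    Real.zero_rpow (by linarith), sub_zero, show -(2 / p) + 1 = (p - 2) / p by field_simp; ring]
  field_simp

theorem div_sq_rpow_one_div {A t p : ℝ} (hA : 0 ≤ A) (ht : 0 < t) :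
    (A / t ^ 2) ^ (1 / p) = A ^ (1 / p) * t ^ (-(2 / p)) := by
  rw [Real.div_rpow hA (by positivity), div_eq_mul_inv, ← Real.rpow_natCast,
    ← Real.rpow_mul ht.le, ← Real.rpow_neg ht.le]
  norm_num [div_eq_mul_inv]

theorem setIntegral_rpow_le_of_le_add_div_sq {f : ℝ → ℝ} {A B c p : ℝ} (hp : 2 < p)
    (hc : 0 ≤ c) (hA : 0 ≤ A) (hB : 0 ≤ B) (hf0 : ∀ t ∈ Ioc 0 c, 0 ≤ f t)
    (hf : ∀ t ∈ Ioc 0 c, f t ≤ B + A / t ^ 2) :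
    ∫ t in Ioc 0 c, f t ^ (1 / p)
      ≤ B ^ (1 / p) * c + A ^ (1 / p) * (p / (p - 2)) * c ^ (1 - 2 / p) := by
  have hp0 : 0 < 1 / p := by positivity
  have hp1 : 1 / p ≤ 1 := by rw [div_le_one (by positivity)]; linarith
  have hint : IntegrableOn (fun t : ℝ => t ^ (-(2 / p))) (Ioc 0 c) :=
    (intervalIntegral.intervalIntegrable_rpow' (by
      rw [neg_lt_neg_iff, div_lt_one (by positivity)]; linarith)).1
  have hpoint : ∀ t ∈ Ioc 0 c, f t ^ (1 / p) ≤ B ^ (1 / p) + A ^ (1 / p) * t ^ (-(2 / p)) :=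
    fun t ht => calc
      f t ^ (1 / p) ≤ (B + A / t ^ 2) ^ (1 / p) := Real.rpow_le_rpow (hf0 t ht) (hf t ht) hp0.le
      _ ≤ B ^ (1 / p) + (A / t ^ 2) ^ (1 / p) :=
          Real.rpow_add_le_add_rpow hB (by have := ht.1; positivity) hp0.le hp1
      _ = B ^ (1 / p) + A ^ (1 / p) * t ^ (-(2 / p)) := by rw [div_sq_rpow_one_div hA ht.1]
  calc ∫ t in Ioc 0 c, f t ^ (1 / p)
      ≤ ∫ t in Ioc 0 c, (B ^ (1 / p) + A ^ (1 / p) * t ^ (-(2 / p))) :=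
        integral_mono_of_nonneg
          (ae_restrict_of_forall_mem measurableSet_Ioc fun t ht => Real.rpow_nonneg (hf0 t ht) _)
          ((integrable_const _).add (hint.const_mul _))
          (ae_restrict_of_forall_mem measurableSet_Ioc hpoint)
    _ = B ^ (1 / p) * c + A ^ (1 / p) * (p / (p - 2)) * c ^ (1 - 2 / p) := by
        rw [integral_add (integrable_const _) (hint.const_mul _),
          integral_const_mul, integral_Ioc_zero_rpow_neg_two_div hp hc, setIntegral_const,
          Real.volume_real_Ioc_of_le hc, smul_eq_mul]
        ring

theorem integral_rpow_sum_min_le_general (α : ℕ → ℝ)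
    (hαr : ∀ k, α k ∈ Set.Icc (0 : ℝ) 1)
    (hαfin : ∀ u > (0 : ℝ), alphaInv α u < ⊤)
    (H Q : ℝ → ℝ)
    (hHmono : AntitoneOn H (Set.Ici 0))
    (hHr : ∀ t ≥ (0 : ℝ), H t ∈ Set.Icc (0 : ℝ) 1)
    (hHlim : Filter.Tendsto H Filter.atTop (nhds 0))
    (hQ : ∀ u, Q u = sInf {t | 0 ≤ t ∧ H t ≤ u})
    (R : ℝ → ℝ) (hR : ∀ u, R u = (alphaInv α u).toReal * Q u)
    (hRint : IntegrableOn (fun u => R u * Q u) (Set.Ioc 0 1))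
    (v : ℝ) (hv : v ∈ Set.Ioc (0 : ℝ) 1)
    (p : ℝ) (hp : 2 < p)
    (q : ℕ) :
    ∫ t in Set.Ioc 0 (Q v), (∑ k ∈ Finset.range q, min (α k) (H t)) ^ (1 / p)
      ≤ (v * q) ^ (1 / p) * Q v
        + (∫ u in Set.Ioc (0 : ℝ) 1, R u * Q u) ^ (1 / p) * (p / (p - 2))
            * Q v ^ (1 - 2 / p) := by
  have hQ0 (u : ℝ) : 0 ≤ Q u := (hQ u).symm ▸ Real.sInf_nonneg fun t ht => ht.1
  have hRQ (u : ℝ) : R u * Q u = (alphaInv α u).toReal * Q u * Q u := by rw [hR]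
  simp only [hRQ] at hRint ⊢
  refine setIntegral_rpow_le_of_le_add_div_sq hp (hQ0 v)
    (integral_nonneg fun u => by have := hQ0 u; positivity) (by have := hv.1; positivity)
    (fun t ht => Finset.sum_nonneg fun k _ => le_min (hαr k).1 (hHr t ht.1.le).1)
    fun t ht => ?_
  refine sum_min_le_mul_add_integral_div_sq α hαfin q (hHr t ht.1.le).2 ht.1 hv.1
    (fun u hu hut => ?_) hRint
  exact (hQ u).symm ▸ le_sInf_sublevelSet_of_lt hHmono hHlim ht.1.le hu hut

/-- The key integral bound:
`∫_0^{Q(v)} (∑_{k=0}^{q-1} min(α(k), H(t)))^{1/p} dt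
  ≤ (v q)^{1/p} Q(v) + (∫_0^1 R(u) Q(u) du)^{1/p} (p/(p-2)) Q(v)^{1-2/p}`
with `q = α⁻¹(v) ∧ n` and `R(u) = α⁻¹(u) Q(u)`. -/
theorem integral_rpow_sum_min_le (α : ℕ → ℝ) (hαmono : Antitone α)
    (hαr : ∀ k, α k ∈ Set.Icc (0 : ℝ) 1)
    (hαfin : ∀ u > (0 : ℝ), alphaInv α u < ⊤)
    (H Q : ℝ → ℝ)
    (hHmono : AntitoneOn H (Set.Ici 0))
    (hHr : ∀ t ≥ (0 : ℝ), H t ∈ Set.Icc (0 : ℝ) 1)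
    (hHrc : ∀ t ≥ (0 : ℝ), ContinuousWithinAt H (Set.Ici t) t)
    (hHlim : Filter.Tendsto H Filter.atTop (nhds 0))
    (hQ : ∀ u, Q u = sInf {t | 0 ≤ t ∧ H t ≤ u})
    (R : ℝ → ℝ) (hR : ∀ u, R u = (alphaInv α u).toReal * Q u)
    (hRint : IntegrableOn (fun u => R u * Q u) (Set.Ioc 0 1))
    (v : ℝ) (hv : v ∈ Set.Ioc (0 : ℝ) 1) (n : ℕ) (hn : 1 ≤ n)
    (p : ℝ) (hp : 2 < p)
    (q : ℕ) (hqdef : (q : ℝ≥0∞) = min (alphaInv α v) (n : ℝ≥0∞)) :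
    ∫ t in Set.Ioc 0 (Q v), (∑ k ∈ Finset.range q, min (α k) (H t)) ^ (1 / p)
      ≤ (v * q) ^ (1 / p) * Q v
        + (∫ u in Set.Ioc (0 : ℝ) 1, R u * Q u) ^ (1 / p) * (p / (p - 2))
            * Q v ^ (1 - 2 / p) :=
  integral_rpow_sum_min_le_general α hαr hαfin H Q hHmono hHr hHlim hQ R hR hRint v hv p hp q
end

section
/- Let (a_n) be defined by a_n = (1/√(n log log n)) · ∫_0^{r_n} g(u) du where g : (0,1] → [0,∞) is measurable, r_n = R^{-1}(m_n) with m_n = a√(n/ log log n) for some a > 0, and R : (0,1] → [0,∞) is nonincreasing with generalized inverse R^{-1}(x) = inf{u ∈ [0,1] : R(u) ≤ x}. If ∫_0^1 R(u) g(u) du < ∞, then ∑_{n≥2} a_n < ∞. -/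
/-!
For `0 < u < r n` the definition of `r n` as an infimum forces `m n < R u`, so by Fubini the
partial sums of the series are at most `∫₀¹ (∑ₙ cₙ 1{m n ≤ R u}) g u du`, where
`cₙ = 1 / √(n log log n)`. It therefore suffices that `∑ₙ cₙ 1{sₙ ≤ y} ≤ C y` for
`sₙ = √(n / log log n)`. For `n ≥ 16` the concavity of `log` gives `c_{n+1} ≤ 4 (s_{n+1} - sₙ)`,
so `s` is increasing there and the tail of that sum telescopes; each of the finitely many
remaining terms is at most `cₙ ≤ sₙ ≤ y`.
-/

open MeasureTheory Real Finset

theorem summable_mul_setIntegral_of_sum_indicator_le {α : Type*} [MeasurableSpace α]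
    {μ : Measure α} {s : Set α} {E : ℕ → Set α} {c : ℕ → ℝ} {g w : α → ℝ}
    (hs : MeasurableSet s) (hg : AEStronglyMeasurable g (μ.restrict s)) (hg0 : ∀ u ∈ s, 0 ≤ g u)
    (hc : ∀ n, 0 ≤ c n) (hE : ∀ n, MeasurableSet (E n)) (hEs : ∀ n, E n ⊆ s)
    (hwg : IntegrableOn (fun u => w u * g u) s μ)
    (hsum : ∀ u ∈ s, ∀ N, ∑ n ∈ range N, (E n).indicator (fun _ => c n) u ≤ w u) :
    Summable fun n => c n * ∫ u in E n, g u ∂μ := by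
  set F : ℕ → α → ℝ := fun n => (E n).indicator fun u => c n * g u
  have hF_integral : ∀ n, ∫ u in s, F n u ∂μ = c n * ∫ u in E n, g u ∂μ := fun n => by
    rw [setIntegral_indicator (hE n), Set.inter_eq_right.2 (hEs n), integral_const_mul]
  have hF_nonneg : ∀ n u, 0 ≤ F n u := fun n =>
    Set.indicator_nonneg fun u hu => mul_nonneg (hc n) (hg0 u (hEs n hu))
  have hF_sum_le : ∀ N, ∀ u ∈ s, ∑ n ∈ range N, F n u ≤ w u * g u := fun N u hu => by
    simp only [F, Set.indicator_mul_left, ← Finset.sum_mul]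
    exact mul_le_mul_of_nonneg_right (hsum u hu N) (hg0 u hu)
  have hF_int : ∀ n, IntegrableOn (F n) s μ := fun n => by
    refine hwg.mono' ((hg.const_mul (c n)).indicator (hE n)) ?_
    filter_upwards [ae_restrict_mem hs] with u hu
    rw [Real.norm_of_nonneg (hF_nonneg n u)]
    calc F n u ≤ ∑ k ∈ range (n + 1), F k u :=
          single_le_sum (fun k _ => hF_nonneg k u) (mem_range.2 n.lt_succ_self)
      _ ≤ w u * g u := hF_sum_le (n + 1) u hu
  refine summable_of_sum_range_le (c := ∫ u in s, w u * g u ∂μ)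
    (fun n => mul_nonneg (hc n) (setIntegral_nonneg (hE n) fun u hu => hg0 u (hEs n hu)))
    fun N => ?_
  calc ∑ n ∈ range N, c n * ∫ u in E n, g u ∂μ = ∫ u in s, ∑ n ∈ range N, F n u ∂μ := by
        rw [integral_finsetSum _ fun n _ => hF_int n]
        exact sum_congr rfl fun n _ => (hF_integral n).symm
    _ ≤ ∫ u in s, w u * g u ∂μ :=
        setIntegral_mono_on (integrable_finsetSum _ fun n _ => hF_int n) hwg hs (hF_sum_le N)

theorem sum_range_ite_le_of_le_mul_sub {M c : ℕ → ℝ} {K y : ℝ} (hK : 0 ≤ K) (hM : Monotone M)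
    (hc : ∀ n, c n ≤ K * (M (n + 1) - M n)) (hM0 : 0 ≤ M 0) (hy : 0 ≤ y) (N : ℕ) :
    ∑ n ∈ range N, (if M (n + 1) ≤ y then c n else 0) ≤ K * y := by
  have hterm : ∀ n,
      (if M (n + 1) ≤ y then c n else 0) ≤ K * (min (M (n + 1)) y - min (M n) y) := by
    intro n
    split_ifs with h
    · rw [min_eq_left h, min_eq_left ((hM n.le_succ).trans h)]; exact hc n
    · exact mul_nonneg hK (sub_nonneg.2 (min_le_min_right y (hM n.le_succ)))
  calc ∑ n ∈ range N, (if M (n + 1) ≤ y then c n else 0)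
      ≤ K * (min (M N) y - min (M 0) y) := by
        rw [← sum_range_sub fun n => min (M n) y, mul_sum]
        exact sum_le_sum fun n _ => hterm n
    _ ≤ K * y := by
        gcongr
        linarith [min_le_right (M N) y, le_min hM0 hy]

theorem exp_one_lt_log_of_sixteen_le {x : ℝ} (hx : 16 ≤ x) : exp 1 < log x := by
  have h16 : log 16 = 4 * log 2 := by
    rw [show (16 : ℝ) = 2 ^ 4 by norm_num, Real.log_pow]; norm_num
  have := Real.log_le_log (by norm_num) hx
  linarith [Real.exp_one_lt_d9, Real.log_two_gt_d9]

theorem one_lt_log_log_of_sixteen_le {x : ℝ} (hx : 16 ≤ x) : 1 < log (log x) := by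
  have h := exp_one_lt_log_of_sixteen_le hx
  rwa [Real.lt_log_iff_exp_lt ((exp_pos 1).trans h)]

theorem log_sub_log_le_div {x y : ℝ} (hx : 0 < x) (hy : 0 < y) : log y - log x ≤ (y - x) / x := by
  rw [← Real.log_div hy.ne' hx.ne', sub_div, div_self hx.ne']
  exact Real.log_le_sub_one_of_pos (div_pos hy hx)

theorem mul_log_log_add_one_sub_le {x : ℝ} (hx : 16 ≤ x) :
    x * (log (log (x + 1)) - log (log x)) ≤ log (log x) / 2 := by
  have hlog : 2 < log x := (Real.exp_one_gt_d9.trans' (by norm_num)).trans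
    (exp_one_lt_log_of_sixteen_le hx)
  have hloglog := one_lt_log_log_of_sixteen_le hx
  have hx0 : 0 < x := by linarith
  have h1 : log (x + 1) - log x ≤ 1 / x := by
    simpa using log_sub_log_le_div hx0 (by linarith : 0 < x + 1)
  have h2 : log (log (x + 1)) - log (log x) ≤ (log (x + 1) - log x) / log x :=
    log_sub_log_le_div (by linarith) (Real.log_pos (by linarith))
  calc x * (log (log (x + 1)) - log (log x)) ≤ x * ((1 / x) / log x) := by
        gcongr; exact h2.trans (by gcongr)
    _ = 1 / log x := by field_simp
    _ ≤ log (log x) / 2 := by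
        rw [div_le_div_iff₀ (by linarith) (by norm_num)]; nlinarith

theorem inv_sqrt_mul_log_log_le_four_mul_sub {x : ℝ} (hx : 16 ≤ x) :
    1 / √((x + 1) * log (log (x + 1))) ≤
      4 * (√((x + 1) / log (log (x + 1))) - √(x / log (log x))) := by
  set L := log (log (x + 1))
  set L₀ := log (log x)
  have hL : 1 < L := one_lt_log_log_of_sixteen_le (by linarith)
  have hL₀ : 1 < L₀ := one_lt_log_log_of_sixteen_le hx
  set A := (x + 1) / L
  set B := x / L₀
  have hA : 0 < A := by positivity
  have hB : 0 < B := div_pos (by linarith) (by linarith)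
  have hAB : 1 / 2 ≤ L * (A - B) := by
    have := mul_log_log_add_one_sub_le hx
    have hxL : x * L / L₀ ≤ x + 1 / 2 := by
      rw [div_le_iff₀ (by linarith)]; linarith
    have : L * (A - B) = x + 1 - x * L / L₀ := by simp only [A, B]; field_simp
    linarith
  have hsqrt : √((x + 1) * L) = L * √A := by
    rw [show (x + 1) * L = L ^ 2 * A by simp only [A]; field_simp, Real.sqrt_mul (by positivity),
      Real.sqrt_sq (by linarith)]
  rw [hsqrt, div_le_iff₀ (by positivity)]
  have hsA := Real.sq_sqrt hA.le
  have hsB := Real.sq_sqrt hB.le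
  nlinarith [mul_nonneg (by linarith : (0 : ℝ) ≤ L) (sq_nonneg (√A - √B)), Real.sqrt_nonneg A,
    Real.sqrt_nonneg B]

noncomputable def sqrtDivLogLog (n : ℕ) : ℝ := √(n / log (log n))

noncomputable def invSqrtMulLogLog (n : ℕ) : ℝ := 1 / √(n * log (log n))

theorem invSqrtMulLogLog_nonneg (n : ℕ) : 0 ≤ invSqrtMulLogLog n := by
  unfold invSqrtMulLogLog; positivity

theorem invSqrtMulLogLog_succ_le {n : ℕ} (hn : 16 ≤ n) :
    invSqrtMulLogLog (n + 1) ≤ 4 * (sqrtDivLogLog (n + 1) - sqrtDivLogLog n) := by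
  unfold invSqrtMulLogLog sqrtDivLogLog
  push_cast
  exact inv_sqrt_mul_log_log_le_four_mul_sub (by exact_mod_cast hn)

theorem invSqrtMulLogLog_le_sqrtDivLogLog (n : ℕ) : invSqrtMulLogLog n ≤ sqrtDivLogLog n := by
  unfold invSqrtMulLogLog sqrtDivLogLog
  rcases le_or_gt (log (log n)) 0 with hL | hL
  · -- junk values: for `n ≤ 2` both square roots are of nonpositive numbers, hence `0`
    rw [Real.sqrt_eq_zero'.2 (mul_nonpos_of_nonneg_of_nonpos n.cast_nonneg hL), div_zero]
    positivity
  rcases Nat.eq_zero_or_pos n with rfl | hn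
  · simp
  have hn1 : (1 : ℝ) ≤ n := by exact_mod_cast hn
  rw [Real.sqrt_mul n.cast_nonneg, Real.sqrt_div n.cast_nonneg,
    div_le_div_iff₀ (by positivity) (by positivity)]
  have := Real.sq_sqrt n.cast_nonneg
  nlinarith [Real.sqrt_nonneg (n : ℝ), Real.sqrt_pos.2 hL]

theorem sum_range_ite_sqrtDivLogLog_le {y : ℝ} (hy : 0 ≤ y) (N : ℕ) :
    ∑ n ∈ range N, (if sqrtDivLogLog n ≤ y then invSqrtMulLogLog n else 0) ≤ 21 * y := by
  set f : ℕ → ℝ := fun n => if sqrtDivLogLog n ≤ y then invSqrtMulLogLog n else 0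
  have hf0 : ∀ n, 0 ≤ f n := fun n => ite_nonneg (invSqrtMulLogLog_nonneg n) le_rfl
  have hf_le : ∀ n, f n ≤ y := fun n => by
    simp only [f]; split_ifs with h
    exacts [(invSqrtMulLogLog_le_sqrtDivLogLog n).trans h, hy]
  have htail : ∑ n ∈ range N, f (17 + n) ≤ 4 * y := by
    have hmono : Monotone fun n => sqrtDivLogLog (n + 16) := monotone_nat_of_le_succ fun n => by
      have := invSqrtMulLogLog_succ_le (n := n + 16) (by omega)
      linarith [invSqrtMulLogLog_nonneg (n + 16 + 1)]
    have := sum_range_ite_le_of_le_mul_sub (M := fun n => sqrtDivLogLog (n + 16))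
      (c := fun n => invSqrtMulLogLog (n + 17)) (by norm_num) hmono
      (fun n => invSqrtMulLogLog_succ_le (by omega)) (Real.sqrt_nonneg _) hy N
    simpa only [f, add_comm 17] using this
  calc ∑ n ∈ range N, f n ≤ ∑ n ∈ range (17 + N), f n :=
        sum_le_sum_of_subset_of_nonneg (range_mono (by omega)) fun n _ _ => hf0 n
    _ = ∑ n ∈ range 17, f n + ∑ n ∈ range N, f (17 + n) := sum_range_add f 17 N
    _ ≤ 17 * y + 4 * y := by
        gcongr
        simpa using sum_le_card_nsmul (range 17) f y fun n _ => hf_le n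
    _ = 21 * y := by ring

noncomputable def genInv (R : ℝ → ℝ) (x : ℝ) : ℝ := sInf {u | u ∈ Set.Icc (0 : ℝ) 1 ∧ R u ≤ x}

theorem genInv_le_one (R : ℝ → ℝ) (x : ℝ) : genInv R x ≤ 1 := by
  rcases Set.eq_empty_or_nonempty {u | u ∈ Set.Icc (0 : ℝ) 1 ∧ R u ≤ x} with h | ⟨_, hv⟩
  · rw [genInv, h, Real.sInf_empty]; exact zero_le_one
  · exact (csInf_le ⟨0, fun _ hu => hu.1.1⟩ hv).trans hv.1.2

theorem lt_of_lt_genInv {R : ℝ → ℝ} {x u : ℝ} (hu : u ∈ Set.Icc (0 : ℝ) 1) (h : u < genInv R x) :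
    x < R u :=
  not_le.1 fun hle => notMem_of_lt_csInf h ⟨0, fun _ hv => hv.1.1⟩ ⟨hu, hle⟩

theorem summable_integral_quantile_general (g R : ℝ → ℝ) (hg : Measurable g)
    (hg0 : ∀ u ∈ Set.Ioc (0 : ℝ) 1, 0 ≤ g u)
    (hR0 : ∀ u ∈ Set.Ioc (0 : ℝ) 1, 0 ≤ R u)
    (hint : IntegrableOn (fun u => R u * g u) (Set.Ioc 0 1))
    (a : ℝ) (ha : 0 < a) (m r : ℕ → ℝ)
    (hm : ∀ n, m n = a * Real.sqrt (n / Real.log (Real.log n)))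
    (hr : ∀ n, r n = sInf {u | u ∈ Set.Icc (0 : ℝ) 1 ∧ R u ≤ m n}) :
    Summable (fun n : ℕ =>
      (1 / Real.sqrt ((n + 2) * Real.log (Real.log (n + 2)))) *
        ∫ u in Set.Ioc 0 (r (n + 2)), g u) := by
  have hr1 : ∀ n, r n ≤ 1 := fun n => (hr n).trans_le (genInv_le_one R (m n))
  have hmR : ∀ n, ∀ u ∈ Set.Ioo 0 (r n), sqrtDivLogLog n ≤ R u / a := fun n u hu => by
    rw [le_div_iff₀' ha, sqrtDivLogLog, ← hm n]
    exact (lt_of_lt_genInv ⟨hu.1.le, hu.2.le.trans (hr1 n)⟩ (hu.2.trans_eq (hr n))).le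
  have hsum : Summable fun n => invSqrtMulLogLog n * ∫ u in Set.Ioo 0 (r n), g u := by
    refine summable_mul_setIntegral_of_sum_indicator_le (w := fun u => 21 * (R u / a))
      measurableSet_Ioc hg.aestronglyMeasurable hg0 invSqrtMulLogLog_nonneg
      (fun _ => measurableSet_Ioo) (fun n u hu => ⟨hu.1, hu.2.le.trans (hr1 n)⟩)
      (IntegrableOn.congr_fun (hint.const_mul (21 / a)) (fun u _ => by ring) measurableSet_Ioc) ?_
    intro u hu N
    refine (sum_le_sum fun n _ => Set.indicator_apply_le' (fun hn => (if_pos (hmR n u hn)).ge)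
      fun _ => ite_nonneg (invSqrtMulLogLog_nonneg n) le_rfl).trans ?_
    exact sum_range_ite_sqrtDivLogLog_le (div_nonneg (hR0 u hu) ha.le) N
  refine ((summable_nat_add_iff 2).2 hsum).congr fun n => ?_
  rw [integral_Ioc_eq_integral_Ioo, invSqrtMulLogLog]
  push_cast
  rfl

/-- Summability lemma: if `∫_0^1 R(u) g(u) du < ∞`, then
`∑_{n ≥ 2} (1/√(n log log n)) ∫_0^{r_n} g(u) du < ∞`, where
`r_n = R⁻¹(m_n)` and `m_n = a √(n / log log n)`. -/
theorem summable_integral_quantile (g R : ℝ → ℝ) (hg : Measurable g)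
    (hg0 : ∀ u ∈ Set.Ioc (0 : ℝ) 1, 0 ≤ g u)
    (hRmono : AntitoneOn R (Set.Ioc 0 1))
    (hR0 : ∀ u ∈ Set.Ioc (0 : ℝ) 1, 0 ≤ R u)
    (hint : IntegrableOn (fun u => R u * g u) (Set.Ioc 0 1))
    (a : ℝ) (ha : 0 < a) (m r : ℕ → ℝ)
    (hm : ∀ n, m n = a * Real.sqrt (n / Real.log (Real.log n)))
    (hr : ∀ n, r n = sInf {u | u ∈ Set.Icc (0 : ℝ) 1 ∧ R u ≤ m n}) :
    Summable (fun n : ℕ =>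
      (1 / Real.sqrt ((n + 2) * Real.log (Real.log (n + 2)))) *
        ∫ u in Set.Ioc 0 (r (n + 2)), g u) :=
  summable_integral_quantile_general g R hg hg0 hR0 hint a ha m r hm hr
end
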